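/- arXiv:2305.18130 — 2 statements merged into one kernel-verified Lean document; each statement's English description precedes it below -/
import Mathlib

section
/- Under the standing setup with s odd, and with R = {v ∈ V(G) : x_v ≥ x_z/(2(h+1))}: the subgraph of G induced by V(G) \ R contains no edge, i.e., G[V(G) \ R] is an empty graph on n - (s-1)/2 vertices. -/
open SimpleGraph Matrix

/-- The adjacency matrix of a simple graph, over `ℝ`. -/
noncomputable def adjMat {V : Type*} (G : SimpleGraph V) : Matrix V V ℝ :=
  fun a b => by classical exact if G.Adj a b then 1 else 0

/-- The spectral radius of a graph: the largest (real) eigenvalue of its adjacency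
matrix, expressed as the supremum of the real spectrum. -/
noncomputable def specRad {V : Type*} [Fintype V] [DecidableEq V] (G : SimpleGraph V) : ℝ :=
  sSup (spectrum ℝ (adjMat G))

/-- A linear forest: an acyclic graph in which every vertex has degree at most 2,
i.e. every connected component is a path. -/
def IsLinearForest {V : Type*} (H : SimpleGraph V) : Prop :=
  H.IsAcyclic ∧ ∀ v, {w | H.Adj v w}.ncard ≤ 2

/-- `G` contains some member of `𝓛 s`, the family of linear forests with `s` edges. -/
def ContainsLinForest {V : Type*} (G : SimpleGraph V) (s : ℕ) : Prop :=
  ∃ H : SimpleGraph V, H ≤ G ∧ IsLinearForest H ∧ H.edgeSet.ncard = s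

/-- `G` belongs to `Ex_sp(n, {K_{k+1}, 𝓛_s})`: it is `{K_{k+1}, 𝓛_s}`-free and has the
maximum spectral radius among all such graphs on `n` vertices. -/
def IsExtremal (n k s : ℕ) (G : SimpleGraph (Fin n)) : Prop :=
  G.CliqueFree (k + 1) ∧ ¬ ContainsLinForest G s ∧
    ∀ H : SimpleGraph (Fin n), H.CliqueFree (k + 1) → ¬ ContainsLinForest H s →
      specRad H ≤ specRad G

/-- The degree of `v` in `G`. -/
noncomputable def degOf {V : Type*} (G : SimpleGraph V) (v : V) : ℕ :=
  {w | G.Adj v w}.ncard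


lemma adjMat_apply {V : Type*} (G : SimpleGraph V) (a b : V) [Decidable (G.Adj a b)] :
    adjMat G a b = if G.Adj a b then 1 else 0 := by
  unfold adjMat; congr

lemma mem_spectrum_of_eig {n : ℕ} (M : Matrix (Fin n) (Fin n) ℝ) {μ : ℝ} {y : Fin n → ℝ}
    (hy : y ≠ 0) (hMy : M *ᵥ y = μ • y) : μ ∈ spectrum ℝ M := by
  rw [spectrum.mem_iff]
  intro hU
  rw [Matrix.isUnit_iff_isUnit_det, isUnit_iff_ne_zero] at hU
  apply hU
  rw [← Matrix.exists_mulVec_eq_zero_iff]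
  refine ⟨y, hy, ?_⟩
  have h1 : (algebraMap ℝ (Matrix (Fin n) (Fin n) ℝ)) μ = μ • (1 : Matrix (Fin n) (Fin n) ℝ) :=
    Algebra.algebraMap_eq_smul_one μ
  rw [h1, Matrix.sub_mulVec, Matrix.smul_mulVec, Matrix.one_mulVec, hMy, sub_self]

lemma spectrum_adjMat_le {n : ℕ} (H : SimpleGraph (Fin n)) {μ : ℝ}
    (hμ : μ ∈ spectrum ℝ (adjMat H)) : μ ≤ n := by
  classical
  rw [spectrum.mem_iff] at hμ
  rw [Matrix.isUnit_iff_isUnit_det, isUnit_iff_ne_zero, not_not,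
    ← Matrix.exists_mulVec_eq_zero_iff] at hμ
  obtain ⟨y, hy0, hy⟩ := hμ
  have h1 : (algebraMap ℝ (Matrix (Fin n) (Fin n) ℝ)) μ = μ • (1 : Matrix (Fin n) (Fin n) ℝ) :=
    Algebra.algebraMap_eq_smul_one μ
  rw [h1, Matrix.sub_mulVec, Matrix.smul_mulVec, Matrix.one_mulVec, sub_eq_zero] at hy
  -- pick max |y i|
  rcases Nat.eq_zero_or_pos n with rfl | hpos
  · exact absurd (Subsingleton.elim y 0) hy0
  obtain ⟨i, -, hi⟩ := Finset.exists_max_image Finset.univ (fun j => |y j|) 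
    ⟨⟨0, hpos⟩, Finset.mem_univ _⟩
  have hyi : 0 < |y i| := by
    obtain ⟨j, hj⟩ := Function.ne_iff.mp hy0
    have := hi j (Finset.mem_univ j)
    have hj' : 0 < |y j| := abs_pos.mpr hj
    linarith
  have key : |μ| * |y i| ≤ n * |y i| := by
    have h2 : ((adjMat H) *ᵥ y) i = μ * y i := by rw [← hy]; rfl
    have h3 : |μ * y i| = |∑ j, adjMat H i j * y j| := by
      rw [← h2]; rfl
    have h4 : |∑ j, adjMat H i j * y j| ≤ ∑ j : Fin n, |y i| := by
      refine (Finset.abs_sum_le_sum_abs _ _).trans (Finset.sum_le_sum fun j _ => ?_)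
      rw [abs_mul]
      have hb : |adjMat H i j| ≤ 1 := by
        rw [adjMat_apply]
        split <;> simp
      calc |adjMat H i j| * |y j| ≤ 1 * |y j| := by
            exact mul_le_mul_of_nonneg_right hb (abs_nonneg _)
        _ = |y j| := by ring
        _ ≤ |y i| := hi j (Finset.mem_univ j)
    calc |μ| * |y i| = |μ * y i| := (abs_mul _ _).symm
      _ ≤ ∑ j : Fin n, |y i| := h3 ▸ h4
      _ = n * |y i| := by rw [Finset.sum_const, Finset.card_univ, Fintype.card_fin]; simp
  have : |μ| ≤ n := le_of_mul_le_mul_right (by linarith [key]) hyi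
  exact (le_abs_self μ).trans this

lemma specRad_ge_of_eig {n : ℕ} (H : SimpleGraph (Fin n)) {μ : ℝ} {y : Fin n → ℝ}
    (hy : y ≠ 0) (hMy : adjMat H *ᵥ y = μ • y) : μ ≤ specRad H :=
  le_csSup ⟨(n : ℝ), fun _ hm => spectrum_adjMat_le H hm⟩ (mem_spectrum_of_eig _ hy hMy)


def bip (n h : ℕ) : SimpleGraph (Fin n) where
  Adj u v := (u.1 < h) ≠ (v.1 < h)
  symm := ⟨fun _ _ huv => huv.symm⟩
  loopless := ⟨fun _ huu => huu rfl⟩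

lemma bip_adj {n h : ℕ} (u v : Fin n) : (bip n h).Adj u v ↔ ((u.1 < h) ≠ (v.1 < h)) := Iff.rfl

lemma card_small {n h : ℕ} (hhn : h ≤ n) [DecidablePred (fun v : Fin n => v.1 < h)] :
    ((Finset.univ : Finset (Fin n)).filter (fun v => v.1 < h)).card = h := by
  apply Finset.card_eq_of_bijective (fun i hi => ⟨i, lt_of_lt_of_le hi hhn⟩)
  · intro a ha
    rw [Finset.mem_filter] at ha
    exact ⟨a.1, ha.2, rfl⟩
  · intro i hi
    simp [Finset.mem_filter, hi]
  · intro i j hi hj hij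
    simpa using congrArg Fin.val hij

lemma bip_cliqueFree {n h k : ℕ} (hk : 2 ≤ k) : (bip n h).CliqueFree (k + 1) := by
  intro t ht
  have hcard : 2 < t.card := by rw [ht.2]; omega
  have hmap : ∀ a ∈ t, (fun v : Fin n => decide (v.1 < h)) a ∈ (Finset.univ : Finset Bool) :=
    fun a _ => Finset.mem_univ _
  obtain ⟨a, ha, b, hb, hab, heq⟩ :=
    Finset.exists_ne_map_eq_of_card_lt_of_maps_to (by simpa using hcard) hmap
  have hadj := ht.1 ha hb hab
  rw [bip_adj] at hadj
  exact hadj (by simpa [decide_eq_decide] using heq)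

lemma bip_linFree {n h s : ℕ} (hhn : h ≤ n) (hs : 2 * h < s) :
    ¬ ContainsLinForest (bip n h) s := by
  classical
  rintro ⟨H, hle, ⟨-, hdeg⟩, hcard⟩
  set F := (H.edgeSet.toFinite).toFinset with hF
  have hFcard : F.card = s := by
    rw [← Set.ncard_eq_toFinset_card _ (H.edgeSet.toFinite), hcard]
  set gmin : Sym2 (Fin n) → Fin n := Sym2.lift ⟨min, min_comm⟩ with hgmin
  set gmax : Sym2 (Fin n) → Fin n := Sym2.lift ⟨max, max_comm⟩ with hgmax
  have hrecon : ∀ e : Sym2 (Fin n), e = s(gmin e, gmax e) := by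
    intro e
    induction e with
    | _ a b =>
      rcases le_total a b with hab | hab
      · simp [hgmin, hgmax, min_eq_left hab, max_eq_right hab]
      · rw [Sym2.eq_swap]
        simp only [hgmin, hgmax, Sym2.lift_mk]
        rw [inf_eq_left.mpr hab, sup_eq_right.mpr hab]
  have hadjF : ∀ e ∈ F, H.Adj (gmin e) (gmax e) := by
    intro e he
    rw [hF, Set.Finite.mem_toFinset] at he
    have := hrecon e
    rw [this] at he
    exact he
  set S : Finset (Fin n) := Finset.univ.filter (fun v => v.1 < h) with hS
  have hmapS : ∀ e ∈ F, gmin e ∈ S := by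
    intro e he
    have hadj := hadjF e he
    have hadj2 : (bip n h).Adj (gmin e) (gmax e) := hle hadj
    rw [bip_adj] at hadj2
    have hminle : (gmin e) ≤ gmax e := by
      have : ∀ e : Sym2 (Fin n), gmin e ≤ gmax e := by
        intro e; induction e with
        | _ a b => exact min_le_max
      exact this e
    rw [hS, Finset.mem_filter]
    refine ⟨Finset.mem_univ _, ?_⟩
    by_contra hlt
    have hmax : ¬ (gmax e).1 < h := fun hc =>
      hlt (lt_of_le_of_lt (by exact_mod_cast hminle) hc)
    exact hadj2 (by rw [eq_iff_iff]; exact iff_of_false hlt hmax)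
  have hfib : ∀ v ∈ S, (F.filter (fun e => gmin e = v)).card ≤ 2 := by
    intro v _
    have h2 : (F.filter (fun e => gmin e = v)).card ≤
        (Finset.univ.filter (fun w => H.Adj v w)).card := by
      apply Finset.card_le_card_of_injOn gmax
      · intro e he
        rw [Finset.mem_coe, Finset.mem_filter] at he
        rw [Finset.mem_coe, Finset.mem_filter]
        refine ⟨Finset.mem_univ _, ?_⟩
        have := hadjF e he.1
        rwa [he.2] at this
      · intro e1 he1 e2 he2 hgeq
        rw [Finset.mem_coe, Finset.mem_filter] at he1 he2
        rw [hrecon e1, hrecon e2, he1.2, he2.2, hgeq]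
    have h3 : (Finset.univ.filter (fun w => H.Adj v w)).card = {w | H.Adj v w}.ncard := by
      rw [Set.ncard_eq_toFinset_card']
      congr 1
      ext w
      simp
    exact h2.trans (h3 ▸ hdeg v)
  have : F.card ≤ 2 * h := by
    rw [Finset.card_eq_sum_card_fiberwise hmapS]
    calc ∑ v ∈ S, (F.filter (fun e => gmin e = v)).card ≤ ∑ v ∈ S, 2 :=
          Finset.sum_le_sum hfib
      _ = 2 * h := by rw [Finset.sum_const, card_small hhn]; ring
  omega


lemma bip_specRad {n h : ℕ} (h1 : 1 ≤ h) (h2 : h < n) :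
    Real.sqrt h * Real.sqrt ((n : ℝ) - h) ≤ specRad (bip n h) := by
  classical
  have hNh : (0:ℝ) ≤ (n : ℝ) - h := by
    have : (h:ℝ) ≤ n := by exact_mod_cast h2.le
    linarith
  have hh0 : (0:ℝ) ≤ (h:ℝ) := Nat.cast_nonneg h
  set μ := Real.sqrt h * Real.sqrt ((n : ℝ) - h) with hμ
  set y : Fin n → ℝ := fun v => if v.1 < h then Real.sqrt ((n : ℝ) - h) else Real.sqrt h
    with hy
  have hcardbig : (Finset.univ.filter (fun v : Fin n => ¬ v.1 < h)).card = n - h := by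
    have hadd := Finset.card_filter_add_card_filter_not
      (s := (Finset.univ : Finset (Fin n))) (p := fun v : Fin n => v.1 < h)
    rw [card_small h2.le, Finset.card_univ, Fintype.card_fin] at hadd
    omega
  apply specRad_ge_of_eig _ (y := y)
  · intro h0
    have h00 : y ⟨0, Nat.pos_of_ne_zero (by omega)⟩ = 0 := congrFun h0 _
    rw [hy] at h00
    simp only [] at h00
    rw [if_pos (show 0 < h by omega)] at h00
    have hgt : Real.sqrt ((n:ℝ) - h) > 0 := Real.sqrt_pos.mpr (by
      have : (h:ℝ) + 1 ≤ n := by exact_mod_cast h2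
      linarith)
    rw [h00] at hgt
    exact lt_irrefl _ hgt
  · funext v
    have hmv : (adjMat (bip n h) *ᵥ y) v = ∑ j, adjMat (bip n h) v j * y j := rfl
    by_cases hv : v.1 < h
    · have hterm : ∀ j : Fin n, adjMat (bip n h) v j * y j =
          if j.1 < h then 0 else Real.sqrt h := by
        intro j
        rw [adjMat_apply, bip_adj]
        by_cases hj : j.1 < h
        · rw [if_pos hj, if_neg (by simp [hv, hj]), zero_mul]
        · rw [if_neg hj, if_pos (by simp [hv, hj]), one_mul, hy]
          simp [hj]
      rw [hmv]
      rw [Finset.sum_congr rfl (fun j _ => hterm j), Finset.sum_ite, Finset.sum_const,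
        Finset.sum_const, hcardbig]
      have hyv : y v = Real.sqrt ((n:ℝ) - h) := by rw [hy]; simp [hv]
      have hrhs : (μ • y) v = Real.sqrt h * ((n:ℝ) - h) := by
        rw [Pi.smul_apply, smul_eq_mul, hyv, hμ]
        rw [mul_assoc, Real.mul_self_sqrt hNh]
      rw [hrhs]
      rw [smul_zero, zero_add, nsmul_eq_mul]
      rw [Nat.cast_sub h2.le]
      ring
    · have hterm : ∀ j : Fin n, adjMat (bip n h) v j * y j =
          if j.1 < h then Real.sqrt ((n:ℝ) - h) else 0 := by
        intro j
        rw [adjMat_apply, bip_adj]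
        by_cases hj : j.1 < h
        · rw [if_pos hj, if_pos (by simp [hv, hj]), one_mul, hy]
          simp [hj]
        · rw [if_neg hj, if_neg (by simp [hv, hj]), zero_mul]
      rw [hmv]
      rw [Finset.sum_congr rfl (fun j _ => hterm j), Finset.sum_ite, Finset.sum_const,
        Finset.sum_const, card_small h2.le]
      have hyv : y v = Real.sqrt h := by rw [hy]; simp [hv]
      have hrhs : (μ • y) v = (h:ℝ) * Real.sqrt ((n:ℝ) - h) := by
        rw [Pi.smul_apply, smul_eq_mul, hyv, hμ]
        rw [mul_comm (Real.sqrt h) _, mul_assoc, Real.mul_self_sqrt hh0]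
        ring
      rw [hrhs]
      rw [smul_zero, add_zero, nsmul_eq_mul]


lemma reach_eq_of_isolated {V : Type*} (G' : SimpleGraph V) {t a : V}
    (hiso : ∀ u, ¬ G'.Adj t u) (h : G'.Reachable t a) : t = a := by
  obtain ⟨p⟩ := h
  cases p with
  | nil => rfl
  | cons hadj q => exact absurd hadj (hiso _)

lemma acyclic_of_pendant {V : Type*} (H : SimpleGraph V)
    (hp : ∀ a b, H.Adj a b → {w | H.Adj b w} = {a} ∨ {w | H.Adj a w} = {b}) :
    H.IsAcyclic := by
  rw [isAcyclic_iff_forall_adj_isBridge]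
  intro v w hvw
  rw [isBridge_iff]
  intro hr
  rcases hp v w hvw with hcase | hcase
  · have hiso : ∀ u, ¬ (H \ fromEdgeSet {s(v, w)}).Adj w u := by
      intro u hu
      rw [sdiff_adj] at hu
      have hmem : u ∈ {x | H.Adj w x} := hu.1
      rw [hcase, Set.mem_singleton_iff] at hmem
      subst hmem
      exact hu.2 (by rw [fromEdgeSet_adj]; exact ⟨by rw [Sym2.eq_swap]; exact Set.mem_singleton _, hvw.symm.ne⟩)
    exact hvw.ne (reach_eq_of_isolated _ hiso hr.symm).symm
  · have hiso : ∀ u, ¬ (H \ fromEdgeSet {s(v, w)}).Adj v u := by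
      intro u hu
      rw [sdiff_adj] at hu
      have hmem : u ∈ {x | H.Adj v x} := hu.1
      rw [hcase, Set.mem_singleton_iff] at hmem
      subst hmem
      exact hu.2 (by rw [fromEdgeSet_adj]; exact ⟨rfl, hvw.ne⟩)
    exact hvw.ne (reach_eq_of_isolated _ hiso hr)

lemma starForest {n : ℕ} (G : SimpleGraph (Fin n)) (T : Finset (Fin n)) (f : Fin n → Fin n)
    (hadj : ∀ t ∈ T, G.Adj (f t) t)
    (hnotT : ∀ t ∈ T, f t ∉ T)
    (hfib : ∀ c : Fin n, (T.filter (fun t => f t = c)).card ≤ 2) :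
    ContainsLinForest G T.card := by
  classical
  set E : Finset (Sym2 (Fin n)) := T.image (fun t => s(f t, t)) with hE
  set H : SimpleGraph (Fin n) := fromEdgeSet ↑E with hH
  have hchar : ∀ a b, H.Adj a b ↔ (b ∈ T ∧ a = f b) ∨ (a ∈ T ∧ b = f a) := by
    intro a b
    rw [hH, fromEdgeSet_adj]
    constructor
    · rintro ⟨he, -⟩
      rw [Finset.mem_coe, hE, Finset.mem_image] at he
      obtain ⟨t, ht, hts⟩ := he
      rw [Sym2.eq_iff] at hts
      rcases hts with ⟨h1, h2⟩ | ⟨h1, h2⟩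
      · exact Or.inl ⟨h2 ▸ ht, by rw [← h1, h2]⟩
      · exact Or.inr ⟨h2 ▸ ht, by rw [← h1, h2]⟩
    · rintro (⟨hbT, rfl⟩ | ⟨haT, rfl⟩)
      · exact ⟨Finset.mem_coe.mpr (Finset.mem_image.mpr ⟨b, hbT, rfl⟩),
          (hadj b hbT).ne⟩
      · refine ⟨Finset.mem_coe.mpr (Finset.mem_image.mpr ⟨a, haT, by rw [Sym2.eq_swap]⟩),
          (hadj a haT).ne.symm⟩
  have hnbrT : ∀ v ∈ T, {w | H.Adj v w} = {f v} := by
    intro v hvT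
    ext w
    rw [Set.mem_setOf_eq, hchar, Set.mem_singleton_iff]
    constructor
    · rintro (⟨hwT, rfl⟩ | ⟨-, rfl⟩)
      · exact absurd hvT (hnotT w hwT)
      · rfl
    · rintro rfl
      exact Or.inr ⟨hvT, rfl⟩
  refine ⟨H, ?_, ⟨?_, ?_⟩, ?_⟩
  · intro a b hab
    rcases (hchar a b).mp hab with ⟨hbT, rfl⟩ | ⟨haT, rfl⟩
    · exact hadj b hbT
    · exact (hadj a haT).symm
  · apply acyclic_of_pendant
    intro a b hab
    rcases (hchar a b).mp hab with ⟨hbT, rfl⟩ | ⟨haT, rfl⟩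
    · exact Or.inl (hnbrT b hbT)
    · exact Or.inr (hnbrT a haT)
  · intro v
    by_cases hvT : v ∈ T
    · rw [hnbrT v hvT]
      simp
    · have : {w | H.Adj v w} = ↑(T.filter (fun t => f t = v)) := by
        ext w
        rw [Set.mem_setOf_eq, hchar, Finset.coe_filter, Set.mem_setOf_eq]
        constructor
        · rintro (⟨hwT, rfl⟩ | ⟨hvT', -⟩)
          · exact ⟨hwT, rfl⟩
          · exact absurd hvT' hvT
        · rintro ⟨hwT, rfl⟩
          exact Or.inl ⟨hwT, rfl⟩
      rw [this, Set.ncard_coe_finset]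
      exact hfib v
  · rw [hH, edgeSet_fromEdgeSet]
    have hnd : ↑E \ {e : Sym2 (Fin n) | e.IsDiag} = (↑E : Set (Sym2 (Fin n))) := by
      ext e
      simp only [Set.mem_diff, Set.mem_setOf_eq, and_iff_left_iff_imp]
      intro heE hdiag
      rw [Finset.mem_coe, hE, Finset.mem_image] at heE
      obtain ⟨t, ht, rfl⟩ := heE
      rw [Sym2.isDiag_iff_proj_eq] at hdiag
      exact (hadj t ht).ne hdiag
    rw [Sym2.diagSet_eq_setOfPred_isDiag, hnd, Set.ncard_coe_finset]
    apply Finset.card_image_of_injOn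
    intro t1 ht1 t2 ht2 heq
    rw [Sym2.eq_iff] at heq
    rcases heq with ⟨-, h2⟩ | ⟨h1, -⟩
    · exact h2
    · exact absurd (h1 ▸ ht2) (hnotT t1 ht1)


lemma degOf_eq_filter {n : ℕ} (G : SimpleGraph (Fin n)) (v : Fin n)
    [DecidablePred (G.Adj v)] :
    degOf G v = (Finset.univ.filter (fun w => G.Adj v w)).card := by
  rw [degOf, Set.ncard_eq_toFinset_card']
  congr 1
  ext w
  simp

lemma greedy {n : ℕ} (G : SimpleGraph (Fin n)) (W : Finset (Fin n)) :
    ∀ (F : Finset (Fin n)),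
      (∀ c ∈ W, F.card + 3 * W.card + 2 ≤ degOf G c) →
      ∃ (T : Finset (Fin n)) (f : Fin n → Fin n),
        T.card = 2 * W.card ∧
        (∀ t ∈ T, f t ∈ W ∧ G.Adj (f t) t ∧ t ∉ F ∧ t ∉ W) ∧
        (∀ c : Fin n, (T.filter (fun t => f t = c)).card ≤ 2) := by
  classical
  induction W using Finset.induction_on with
  | empty =>
    intro F _
    exact ⟨∅, id, by simp, by simp, by simp⟩
  | @insert c W' hc IH =>
    intro F hdeg
    obtain ⟨T', f', hT'card, hT'mem, hT'fib⟩ := IH (insert c F) (by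
      intro c' hc'
      have h1 := hdeg c' (Finset.mem_insert_of_mem hc')
      have h2 : (insert c F).card ≤ F.card + 1 := Finset.card_insert_le _ _
      have h3 : (insert c W').card = W'.card + 1 := Finset.card_insert_of_notMem hc
      omega)
    have hcdeg := hdeg c (Finset.mem_insert_self c W')
    rw [degOf_eq_filter] at hcdeg
    set B : Finset (Fin n) := F ∪ insert c W' ∪ T' with hB
    have hBcard : B.card ≤ F.card + 3 * W'.card + 2 := by
      calc B.card ≤ (F ∪ insert c W').card + T'.card := Finset.card_union_le _ _
        _ ≤ F.card + (insert c W').card + T'.card := by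
            have := Finset.card_union_le F (insert c W')
            omega
        _ ≤ F.card + (W'.card + 1) + 2 * W'.card := by
            have := Finset.card_insert_le c W'
            omega
        _ ≤ F.card + 3 * W'.card + 2 := by omega
    set avail : Finset (Fin n) := (Finset.univ.filter (fun w => G.Adj c w)) \ B with havail
    have havailcard : 1 < avail.card := by
      rw [havail]
      have h4 := Finset.le_card_sdiff B (Finset.univ.filter (fun w => G.Adj c w))
      have h5 : (insert c W').card = W'.card + 1 := Finset.card_insert_of_notMem hc
      rw [h5] at hcdeg
      omega
    obtain ⟨a, ha, b, hb, hab⟩ := Finset.one_lt_card.mp havailcard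
    have haprop : G.Adj c a ∧ a ∉ B := by
      rw [havail, Finset.mem_sdiff, Finset.mem_filter] at ha
      exact ⟨ha.1.2, ha.2⟩
    have hbprop : G.Adj c b ∧ b ∉ B := by
      rw [havail, Finset.mem_sdiff, Finset.mem_filter] at hb
      exact ⟨hb.1.2, hb.2⟩
    have hnotB : ∀ u, u ∉ B → u ∉ F ∧ u ∉ insert c W' ∧ u ∉ T' := by
      intro u hu
      rw [hB] at hu
      simp only [Finset.mem_union, not_or] at hu
      exact ⟨hu.1.1, hu.1.2, hu.2⟩
    have haT' : a ∉ T' := (hnotB a haprop.2).2.2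
    have hbT' : b ∉ T' := (hnotB b hbprop.2).2.2
    set f : Fin n → Fin n := fun t => if t = a ∨ t = b then c else f' t with hf
    have hfa : f a = c := by rw [hf]; simp
    have hfb : f b = c := by rw [hf]; simp
    have hft : ∀ t ∈ T', f t = f' t := by
      intro t ht
      rw [hf]
      simp only []
      rw [if_neg]
      rintro (rfl | rfl)
      · exact haT' ht
      · exact hbT' ht
    refine ⟨insert a (insert b T'), f, ?_, ?_, ?_⟩
    · rw [Finset.card_insert_of_notMem (by
        simp only [Finset.mem_insert, not_or]; exact ⟨hab, haT'⟩),
        Finset.card_insert_of_notMem hbT', hT'card,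
        Finset.card_insert_of_notMem hc]
      ring
    · intro t ht
      rcases Finset.mem_insert.mp ht with rfl | ht
      · rw [hfa]
        exact ⟨Finset.mem_insert_self _ _, haprop.1, (hnotB t haprop.2).1,
          (hnotB t haprop.2).2.1⟩
      rcases Finset.mem_insert.mp ht with rfl | ht
      · rw [hfb]
        exact ⟨Finset.mem_insert_self _ _, hbprop.1, (hnotB t hbprop.2).1,
          (hnotB t hbprop.2).2.1⟩
      · rw [hft t ht]
        obtain ⟨hfW, hfadj, hfF, hfW'⟩ := hT'mem t ht
        refine ⟨Finset.mem_insert_of_mem hfW, hfadj, ?_, ?_⟩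
        · intro hFt
          exact hfF (Finset.mem_insert_of_mem hFt)
        · intro hWt
          rcases Finset.mem_insert.mp hWt with rfl | hWt
          · exact hfF (Finset.mem_insert_self _ _)
          · exact hfW' hWt
    · intro c₀
      by_cases hc₀ : c₀ = c
      · subst hc₀
        have hsub : (insert a (insert b T')).filter
            (fun t => f t = c₀) ⊆ {a, b} := by
          intro t ht
          rw [Finset.mem_filter] at ht
          obtain ⟨htmem, htf⟩ := ht
          by_cases hcase : t = a ∨ t = b
          · rcases hcase with rfl | rfl
            · exact Finset.mem_insert_self _ _
            · exact Finset.mem_insert_of_mem (Finset.mem_singleton_self _)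
          · rcases Finset.mem_insert.mp htmem with rfl | htmem
            · exact absurd (Or.inl rfl) hcase
            rcases Finset.mem_insert.mp htmem with rfl | htmem
            · exact absurd (Or.inr rfl) hcase
            · rw [hft t htmem] at htf
              exact absurd (htf ▸ (hT'mem t htmem).1) hc
        calc _ ≤ ({a, b} : Finset (Fin n)).card := Finset.card_le_card hsub
          _ ≤ 2 := Finset.card_insert_le _ _ |>.trans (by simp)
      · have hsub : (insert a (insert b T')).filter
            (fun t => (if t = a ∨ t = b then c else f' t) = c₀) ⊆
            T'.filter (fun t => f' t = c₀) := by
          intro t ht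
          rw [Finset.mem_filter] at ht ⊢
          obtain ⟨htmem, htf⟩ := ht
          by_cases hcase : t = a ∨ t = b
          · rw [if_pos hcase] at htf
            exact (hc₀ htf.symm).elim
          · rw [if_neg hcase] at htf
            rcases Finset.mem_insert.mp htmem with rfl | htmem
            · exact absurd (Or.inl rfl) hcase
            rcases Finset.mem_insert.mp htmem with rfl | htmem
            · exact absurd (Or.inr rfl) hcase
            · exact ⟨htmem, htf⟩
        exact (Finset.card_le_card hsub).trans (hT'fib c₀)


lemma core_forest {n h : ℕ} (G : SimpleGraph (Fin n)) (u v0 : Fin n) (huv : G.Adj u v0)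
    (W : Finset (Fin n)) (hWcard : W.card = h) (huW : u ∉ W) (hv0W : v0 ∉ W)
    (hdegW : ∀ c ∈ W, 3 * h + 5 ≤ degOf G c) :
    ContainsLinForest G (2 * h + 1) := by
  classical
  obtain ⟨T, f, hTcard, hTmem, hTfib⟩ := greedy G W ({u, v0} : Finset (Fin n)) (by
    intro c hcW
    have h1 := hdegW c hcW
    have h2 : ({u, v0} : Finset (Fin n)).card ≤ 2 :=
      (Finset.card_insert_le _ _).trans (by simp)
    rw [hWcard]
    omega)
  have huT : u ∉ T := fun hmem => (hTmem u hmem).2.2.1 (by simp)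
  have hv0T : v0 ∉ T := fun hmem => (hTmem v0 hmem).2.2.1 (by simp)
  set T1 : Finset (Fin n) := insert v0 T with hT1
  set f1 : Fin n → Fin n := fun t => if t = v0 then u else f t with hf1
  have hf1v0 : f1 v0 = u := by rw [hf1]; simp
  have hf1T : ∀ t ∈ T, f1 t = f t := by
    intro t ht
    rw [hf1]
    simp only []
    rw [if_neg (fun hc : t = v0 => hv0T (hc ▸ ht))]
  have hT1card : T1.card = 2 * h + 1 := by
    rw [hT1, Finset.card_insert_of_notMem hv0T, hTcard, hWcard]
  have hres := starForest G T1 f1 ?_ ?_ ?_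
  · rwa [hT1card] at hres
  · intro t ht
    rcases Finset.mem_insert.mp ht with rfl | ht
    · rw [hf1v0]; exact huv
    · rw [hf1T t ht]; exact (hTmem t ht).2.1
  · intro t ht
    rcases Finset.mem_insert.mp ht with rfl | ht
    · rw [hf1v0, hT1]
      intro hmem
      rcases Finset.mem_insert.mp hmem with heq | hmem
      · exact huv.ne heq
      · exact huT hmem
    · rw [hf1T t ht, hT1]
      intro hmem
      rcases Finset.mem_insert.mp hmem with heq | hmem
      · exact hv0W (heq ▸ (hTmem t ht).1)
      · exact (hTmem (f t) hmem).2.2.2 (hTmem t ht).1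
  · intro c₀
    by_cases hc₀ : c₀ = u
    · subst hc₀
      have hsub : T1.filter (fun t => f1 t = c₀) ⊆ {v0} := by
        intro t ht
        rw [Finset.mem_filter] at ht
        obtain ⟨htmem, htf⟩ := ht
        rcases Finset.mem_insert.mp htmem with rfl | htmem
        · exact Finset.mem_singleton_self _
        · rw [hf1T t htmem] at htf
          exact absurd (htf ▸ (hTmem t htmem).1) huW
      calc _ ≤ ({v0} : Finset (Fin n)).card := Finset.card_le_card hsub
        _ ≤ 2 := by simp
    · have hsub : T1.filter (fun t => f1 t = c₀) ⊆ T.filter (fun t => f t = c₀) := by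
        intro t ht
        rw [Finset.mem_filter] at ht ⊢
        obtain ⟨htmem, htf⟩ := ht
        rcases Finset.mem_insert.mp htmem with rfl | htmem
        · rw [hf1v0] at htf
          exact (hc₀ htf.symm).elim
        · rw [hf1T t htmem] at htf
          exact ⟨htmem, htf⟩
      exact (Finset.card_le_card hsub).trans (hTfib c₀)

lemma few_highdeg {n h : ℕ} (G : SimpleGraph (Fin n))
    (hfree : ¬ ContainsLinForest G (2 * h + 1))
    [DecidablePred (fun v : Fin n => 3 * h + 5 ≤ degOf G v)] :
    (Finset.univ.filter (fun v : Fin n => 3 * h + 5 ≤ degOf G v)).card ≤ h := by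
  classical
  by_contra hcon
  push_neg at hcon
  obtain ⟨W1, hW1sub, hW1card⟩ := Finset.exists_subset_card_eq (n := h + 1) hcon
  have hW1ne : W1.Nonempty := Finset.card_pos.mp (by omega)
  obtain ⟨c, hcW1⟩ := hW1ne
  have hcdeg : 3 * h + 5 ≤ degOf G c := by
    have := hW1sub hcW1
    rw [Finset.mem_filter] at this
    exact this.2
  rw [degOf_eq_filter] at hcdeg
  have hne : ((Finset.univ.filter (fun w => G.Adj c w)) \ W1).Nonempty := by
    rw [← Finset.card_pos]
    have := Finset.le_card_sdiff W1 (Finset.univ.filter (fun w => G.Adj c w))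
    omega
  obtain ⟨v0, hv0⟩ := hne
  rw [Finset.mem_sdiff, Finset.mem_filter] at hv0
  apply hfree
  apply core_forest G c v0 hv0.1.2 (W1.erase c)
  · rw [Finset.card_erase_of_mem hcW1, hW1card]
    omega
  · exact Finset.notMem_erase _ _
  · exact fun hmem => hv0.2 (Finset.erase_subset _ _ hmem)
  · intro w hw
    have := hW1sub (Finset.erase_subset _ _ hw)
    rw [Finset.mem_filter] at this
    exact this.2

lemma arith_hn8 {H N α : ℝ} (hH : 0 ≤ H) (hα : α = 1 / (36 * (H + 1) ^ 3))
    (hn : 28 * (H + 1) ^ 2 / α ^ 2 ≤ N) : 36288 * (H + 1) ^ 8 ≤ N := by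
  have hc0 : (0:ℝ) < H + 1 := by linarith
  rw [hα] at hn
  have heq : 28 * (H + 1) ^ 2 / (1 / (36 * (H + 1) ^ 3)) ^ 2 = 36288 * (H + 1) ^ 8 := by
    field_simp
    ring
  rwa [heq] at hn

lemma arith_basic {H N : ℝ} (hH : 1 ≤ H) (hn8 : 36288 * (H + 1) ^ 8 ≤ N) :
    2 * H ≤ N ∧ H + 1 ≤ N ∧ 0 < N := by
  have hc1 : (1:ℝ) ≤ H + 1 := by linarith
  have hc8 : H + 1 ≤ (H + 1) ^ 8 := le_self_pow₀ hc1 (by norm_num)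
  refine ⟨by nlinarith, by nlinarith, by nlinarith⟩

lemma arith_Q {H N : ℝ} (hH : 1 ≤ H) (hn8 : 36288 * (H + 1) ^ 8 ≤ N) :
    (134 * (H + 1) ^ 4) ^ 2 ≤ N / 2 := by
  have hc80 : (0:ℝ) ≤ (H + 1) ^ 8 := by positivity
  have hexp : (134 * (H + 1) ^ 4) ^ 2 = 17956 * (H + 1) ^ 8 := by ring
  rw [hexp]
  linarith

lemma arith_deg {H : ℝ} (hH : 1 ≤ H) : (3 * H + 5) * (2 * (H + 1)) ≤ 134 * (H + 1) ^ 4 := by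
  nlinarith [sq_nonneg (H + 1), sq_nonneg H, hH]

lemma arith_half {H xz : ℝ} (hH : 1 ≤ H) (hxz : 0 < xz) :
    H * (xz / (2 * (H + 1))) ≤ xz / 2 := by
  rw [mul_div_assoc']
  rw [div_le_div_iff₀ (by linarith) (by norm_num)]
  nlinarith [hxz, hH]

lemma numeric_contra {H N P Q xz : ℝ} (hH : 1 ≤ H)
    (hn8 : 36288 * (H + 1) ^ 8 ≤ N)
    (hQbig : 134 * (H + 1) ^ 4 ≤ Q) (hQpos : 0 < Q) (hQP : Q ≤ P) (hPpos : 0 < P)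
    (hQsq : Q ^ 2 = N / 2)
    (hlow : H * (N - H) ≤ P ^ 2)
    (hxz : 0 < xz)
    (hup : P ^ 2 * xz ≤
      H * ((H - 1) * xz + xz / 2 + N * ((3 * H + 4) * xz / P)) +
      N * ((H - 1) * xz + xz / 2 + (3 * H + 4) * ((3 * H + 4) * xz / P))) : False := by
  have hPne : P ≠ 0 := ne_of_gt hPpos
  have hQne : Q ≠ 0 := ne_of_gt hQpos
  have hN2Q : N = 2 * Q ^ 2 := by rw [hQsq]; ring
  -- divide by xz
  have hfact : (H * ((H - 1) + 1 / 2 + N * ((3 * H + 4) / P)) +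
      N * ((H - 1) + 1 / 2 + (3 * H + 4) * ((3 * H + 4) / P))) * xz =
      H * ((H - 1) * xz + xz / 2 + N * ((3 * H + 4) * xz / P)) +
      N * ((H - 1) * xz + xz / 2 + (3 * H + 4) * ((3 * H + 4) * xz / P)) := by
    field_simp
  rw [← hfact] at hup
  have hdivided : P ^ 2 ≤ H * ((H - 1) + 1 / 2 + N * ((3 * H + 4) / P)) +
      N * ((H - 1) + 1 / 2 + (3 * H + 4) * ((3 * H + 4) / P)) :=
    le_of_mul_le_mul_right hup hxz
  have hexp2 : H * ((H - 1) + 1 / 2 + N * ((3 * H + 4) / P)) +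
      N * ((H - 1) + 1 / 2 + (3 * H + 4) * ((3 * H + 4) / P)) =
      (H + N) * (H - 1 / 2) + (H * N * (3 * H + 4) + N * (3 * H + 4) ^ 2) / P := by
    field_simp
    ring
  rw [hexp2] at hdivided
  have h8 : (0:ℝ) < (H + 1) ^ 8 := pow_pos (by linarith) 8
  have hNpos : (0:ℝ) < N := by nlinarith [h8]
  have hnum0 : (0:ℝ) ≤ H * N * (3 * H + 4) + N * (3 * H + 4) ^ 2 := by
    have e1 : (0:ℝ) ≤ H * N * (3 * H + 4) :=
      mul_nonneg (mul_nonneg (by linarith) hNpos.le) (by linarith)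
    have e2 : (0:ℝ) ≤ N * (3 * H + 4) ^ 2 := mul_nonneg hNpos.le (sq_nonneg _)
    linarith
  have hdivQ : (H * N * (3 * H + 4) + N * (3 * H + 4) ^ 2) / P ≤
      (H * N * (3 * H + 4) + N * (3 * H + 4) ^ 2) / Q :=
    div_le_div_of_nonneg_left hnum0 hQpos hQP
  have hQeq : (H * N * (3 * H + 4) + N * (3 * H + 4) ^ 2) / Q =
      2 * Q * (H * (3 * H + 4) + (3 * H + 4) ^ 2) := by
    rw [hN2Q]
    field_simp
  have h1 : P ^ 2 ≤ (H + N) * (H - 1 / 2) + 2 * Q * (H * (3 * H + 4) + (3 * H + 4) ^ 2) := by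
    rw [← hQeq]
    linarith
  rw [hN2Q] at h1 hlow
  clear hn8 hup hfact hdivided hexp2 hQeq hdivQ hnum0 hN2Q hQsq
  have hkey : Q ^ 2 ≤ 2 * H ^ 2 - H / 2 + 2 * Q * (H * (3 * H + 4) + (3 * H + 4) ^ 2) := by
    linarith [h1, hlow]
  have hH0 : (0:ℝ) ≤ H := by linarith
  have m1 : 134 * (H + 1) ^ 4 * Q ≤ Q ^ 2 := by
    calc 134 * (H + 1) ^ 4 * Q ≤ Q * Q := mul_le_mul_of_nonneg_right hQbig hQpos.le
      _ = Q ^ 2 := (sq Q).symm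
  have hc41 : (1:ℝ) ≤ (H + 1) ^ 4 := one_le_pow₀ (by linarith)
  have hQ1 : (1:ℝ) ≤ Q := by linarith
  have ha3 : (H + 1) ^ 2 ≤ (H + 1) ^ 2 * Q := by
    have := mul_le_mul_of_nonneg_left hQ1 (sq_nonneg (H + 1))
    linarith
  have p1 : (0:ℝ) ≤ H * Q := mul_nonneg hH0 hQpos.le
  have p2 : (0:ℝ) ≤ H ^ 2 * Q := mul_nonneg (sq_nonneg H) hQpos.le
  have p3 : (0:ℝ) ≤ H ^ 3 * Q := mul_nonneg (pow_nonneg hH0 3) hQpos.le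
  have p4 : (0:ℝ) ≤ H ^ 4 * Q := mul_nonneg (pow_nonneg hH0 4) hQpos.le
  linarith [hkey, m1, ha3, p1, p2, p3, p4, hQpos, hH]
set_option maxHeartbeats 1000000 in
/-- Under the standing setup with `s` odd: no edge of `G` joins two vertices outside
`R = {v : x_v ≥ x_z/(2(h+1))}`, i.e. `G[V \ R]` is an empty graph on `n - (s-1)/2`
vertices. -/
theorem outside_R_empty_of_odd
    (k s n : ℕ) (hk : 2 ≤ k) (hs : 3 ≤ s)
    (h : ℕ) (hh : h = (s - 1) / 2) (α : ℝ) (hα : α = 1 / (36 * ((h : ℝ) + 1) ^ 3))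
    (hn : 28 * ((h : ℝ) + 1) ^ 2 / α ^ 2 ≤ (n : ℝ))
    (G : SimpleGraph (Fin n)) (hG : IsExtremal n k s G)
    (x : Fin n → ℝ) (hxpos : ∀ v, 0 < x v) (hxnorm : ∑ v, x v ^ 2 = 1)
    (heig : adjMat G *ᵥ x = specRad G • x)
    (z : Fin n) (hz : ∀ v, x v ≤ x z)
    (hodd : Odd s) :
    (∀ u v : Fin n, u ∉ {v : Fin n | x z / (2 * ((h : ℝ) + 1)) ≤ x v} →
        v ∉ {v : Fin n | x z / (2 * ((h : ℝ) + 1)) ≤ x v} → ¬ G.Adj u v) ∧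
    Set.ncard {v : Fin n | x z / (2 * ((h : ℝ) + 1)) ≤ x v}ᶜ = n - (s - 1) / 2 := by
  classical
  -- arithmetic setup
  have hs2h : s = 2 * h + 1 := by
    obtain ⟨m, hm⟩ := hodd
    omega
  have hh1 : 1 ≤ h := by omega
  have hhr1 : (1:ℝ) ≤ (h:ℝ) := by exact_mod_cast hh1
  have hn8 : 36288 * ((h:ℝ) + 1) ^ 8 ≤ (n : ℝ) := arith_hn8 (by positivity) hα hn
  obtain ⟨hNbig, hNbig2, hnpos⟩ := arith_basic hhr1 hn8
  have hhn : h < n := by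
    have : (h:ℝ) + 1 ≤ (n:ℝ) := hNbig2
    have : (h:ℝ) < (n:ℝ) := by linarith
    exact_mod_cast this
  obtain ⟨ρ, hρdef⟩ : ∃ r : ℝ, r = specRad G := ⟨_, rfl⟩
  rw [← hρdef] at heig
  have hxz : 0 < x z := hxpos z
  -- eigen equation in coordinates
  have heigc : ∀ v, ∑ w ∈ Finset.univ.filter (fun w => G.Adj v w), x w = ρ * x v := by
    intro v
    have h1 : (adjMat G *ᵥ x) v = ρ * x v := by
      rw [heig]; simp
    rw [← h1]
    have h2 : (adjMat G *ᵥ x) v = ∑ w, adjMat G v w * x w := rfl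
    rw [h2, Finset.sum_filter]
    apply Finset.sum_congr rfl
    intro w _
    rw [adjMat_apply]
    by_cases hadj : G.Adj v w
    · rw [if_pos hadj, if_pos hadj, one_mul]
    · rw [if_neg hadj, if_neg hadj, zero_mul]
  -- spectral lower bound
  have hfree : ¬ ContainsLinForest G (2 * h + 1) := by
    rw [← hs2h]; exact hG.2.1
  have hρ_ge : Real.sqrt h * Real.sqrt ((n:ℝ) - h) ≤ ρ := by
    rw [hρdef]
    refine (bip_specRad hh1 hhn).trans ?_
    exact hG.2.2 _ (bip_cliqueFree hk) (bip_linFree hhn.le (by omega))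
  have hsqnn : (0:ℝ) ≤ Real.sqrt h * Real.sqrt ((n:ℝ) - h) := by positivity
  have hρ0 : (0:ℝ) ≤ ρ := hsqnn.trans hρ_ge
  have hρsq : (h:ℝ) * ((n:ℝ) - h) ≤ ρ ^ 2 := by
    have hsq : (Real.sqrt h * Real.sqrt ((n:ℝ) - h)) ^ 2 = (h:ℝ) * ((n:ℝ) - h) := by
      rw [mul_pow, Real.sq_sqrt (by positivity), Real.sq_sqrt (by linarith)]
    nlinarith [hρ_ge, hsqnn]
  have hρ2 : (n:ℝ) / 2 ≤ ρ ^ 2 := by nlinarith [hρsq, hhr1, hNbig]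
  have hρpos : 0 < ρ := by
    rcases hρ0.lt_or_eq with hlt | heq
    · exact hlt
    · exfalso
      rw [← heq] at hρ2
      norm_num at hρ2
      linarith
  obtain ⟨Q, hQ⟩ : ∃ q : ℝ, q = Real.sqrt ((n:ℝ) / 2) := ⟨_, rfl⟩
  have hQρ : Q ≤ ρ := by
    rw [hQ]
    calc Real.sqrt ((n:ℝ)/2) ≤ Real.sqrt (ρ^2) := Real.sqrt_le_sqrt hρ2
      _ = ρ := Real.sqrt_sq hρ0
  have hQbig : 134 * ((h:ℝ) + 1) ^ 4 ≤ Q := by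
    rw [hQ, Real.le_sqrt (by positivity) (by positivity)]
    exact arith_Q hhr1 hn8
  have hQpos : 0 < Q := lt_of_lt_of_le (by positivity) hQbig
  have hQsq : Q ^ 2 = (n:ℝ) / 2 := by rw [hQ]; exact Real.sq_sqrt (by positivity)
  -- degree bounds
  have hdeg_le_n : ∀ v, (Finset.univ.filter (fun w => G.Adj v w)).card ≤ n := by
    intro v
    calc _ ≤ (Finset.univ : Finset (Fin n)).card := Finset.card_le_card (Finset.filter_subset _ _)
      _ = n := by rw [Finset.card_univ, Fintype.card_fin]
  have hsum_le : ∀ (A : Finset (Fin n)) (b : ℝ), (∀ w ∈ A, x w ≤ b) →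
      ∑ w ∈ A, x w ≤ A.card * b := by
    intro A b hb
    calc ∑ w ∈ A, x w ≤ A.card • b := Finset.sum_le_card_nsmul A _ b hb
      _ = A.card * b := nsmul_eq_mul _ _
  have hρx_le : ∀ v, ρ * x v ≤ ((Finset.univ.filter (fun w => G.Adj v w)).card : ℝ) * x z := by
    intro v
    rw [← heigc v]
    exact hsum_le _ _ (fun w _ => hz w)
  have hRdeg : ∀ v, x z / (2 * ((h:ℝ) + 1)) ≤ x v → 3 * h + 5 ≤ degOf G v := by
    intro v hv
    rw [degOf_eq_filter]
    have h1 : ρ * (x z / (2 * ((h:ℝ) + 1))) ≤ ρ * x v := mul_le_mul_of_nonneg_left hv hρ0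
    have h2 := h1.trans (hρx_le v)
    have hDbound : (3 * (h:ℝ) + 5) ≤ ((Finset.univ.filter (fun w => G.Adj v w)).card : ℝ) := by
      have h3 : ρ * (x z / (2 * ((h:ℝ) + 1))) = (ρ / (2 * ((h:ℝ) + 1))) * x z := by ring
      rw [h3] at h2
      have h4 := le_of_mul_le_mul_right h2 hxz
      have h5 : (3 * (h:ℝ) + 5) * (2 * ((h:ℝ) + 1)) ≤ ρ :=
        (arith_deg hhr1).trans (hQbig.trans hQρ)
      calc (3 * (h:ℝ) + 5) ≤ ρ / (2 * ((h:ℝ) + 1)) := by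
            rw [le_div_iff₀ (by linarith)]
            exact h5
        _ ≤ _ := h4
    have hfin : ((3 * h + 5 : ℕ) : ℝ) ≤
        ((Finset.univ.filter (fun w => G.Adj v w)).card : ℝ) := by
      push_cast
      linarith
    exact_mod_cast hfin
  set Hd : Finset (Fin n) := Finset.univ.filter (fun v : Fin n => 3 * h + 5 ≤ degOf G v)
    with hHd
  have hHdcard : Hd.card ≤ h := few_highdeg G hfree
  have hxsmall : ∀ v, v ∉ Hd → x v ≤ (3 * (h:ℝ) + 4) * x z / ρ := by
    intro v hv
    rw [hHd, Finset.mem_filter] at hv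
    have hdv : degOf G v ≤ 3 * h + 4 := by
      by_contra hcon
      exact hv ⟨Finset.mem_univ _, by omega⟩
    rw [degOf_eq_filter] at hdv
    have h1 := hρx_le v
    have h2 : ((Finset.univ.filter (fun w => G.Adj v w)).card : ℝ) ≤ 3 * (h:ℝ) + 4 := by
      have : ((Finset.univ.filter (fun w => G.Adj v w)).card : ℝ) ≤ ((3 * h + 4 : ℕ) : ℝ) := by
        exact_mod_cast hdv
      push_cast at this
      linarith
    have h3 : ρ * x v ≤ (3 * (h:ℝ) + 4) * x z := by
      calc ρ * x v ≤ _ := h1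
        _ ≤ (3 * (h:ℝ) + 4) * x z := mul_le_mul_of_nonneg_right h2 hxz.le
    rw [le_div_iff₀ hρpos]
    linarith [h3]
  set RF : Finset (Fin n) :=
    Finset.univ.filter (fun v : Fin n => x z / (2 * ((h:ℝ) + 1)) ≤ x v) with hRF
  have hRFsub : RF ⊆ Hd := by
    intro v hv
    rw [hRF, Finset.mem_filter] at hv
    rw [hHd, Finset.mem_filter]
    exact ⟨Finset.mem_univ _, hRdeg v hv.2⟩
  have hRFle : RF.card ≤ h := (Finset.card_le_card hRFsub).trans hHdcard
  -- lower bound on RF.card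
  have hRFge : h ≤ RF.card := by
    by_contra hcon
    push_neg at hcon
    have hr : (RF.card : ℝ) ≤ (h:ℝ) - 1 := by
      have h6 : RF.card + 1 ≤ h := hcon
      have h7 := (Nat.cast_le (α := ℝ)).mpr h6
      push_cast at h7
      linarith
    -- per-vertex bound
    have hbound : ∀ u, ρ * x u ≤ ((h:ℝ) - 1) * x z + x z / 2 +
        (if u ∈ Hd then (n:ℝ) else 3 * (h:ℝ) + 4) * ((3 * (h:ℝ) + 4) * x z / ρ) := by
      intro u
      rw [← heigc u]
      set S : Finset (Fin n) := Finset.univ.filter (fun w => G.Adj u w) with hS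
      have hsplit1 : ∑ w ∈ S, x w =
          ∑ w ∈ S.filter (fun w => w ∈ RF), x w +
          ∑ w ∈ S.filter (fun w => w ∉ RF), x w :=
        (Finset.sum_filter_add_sum_filter_not S _ _).symm
      have hsplit2 : ∑ w ∈ S.filter (fun w => w ∉ RF), x w =
          ∑ w ∈ (S.filter (fun w => w ∉ RF)).filter (fun w => w ∈ Hd), x w +
          ∑ w ∈ (S.filter (fun w => w ∉ RF)).filter (fun w => w ∉ Hd), x w :=
        (Finset.sum_filter_add_sum_filter_not _ _ _).symm
      have hb1 : ∑ w ∈ S.filter (fun w => w ∈ RF), x w ≤ ((h:ℝ) - 1) * x z := by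
        calc ∑ w ∈ S.filter (fun w => w ∈ RF), x w ≤
            ((S.filter (fun w => w ∈ RF)).card : ℝ) * x z :=
              hsum_le _ _ (fun w _ => hz w)
          _ ≤ ((h:ℝ) - 1) * x z := by
              apply mul_le_mul_of_nonneg_right _ hxz.le
              refine le_trans ?_ hr
              have hsub : S.filter (fun w => w ∈ RF) ⊆ RF :=
                fun w hw => (Finset.mem_filter.mp hw).2
              exact_mod_cast Finset.card_le_card hsub
      have hb2 : ∑ w ∈ (S.filter (fun w => w ∉ RF)).filter (fun w => w ∈ Hd), x w ≤
          x z / 2 := by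
        have hstep : ∑ w ∈ (S.filter (fun w => w ∉ RF)).filter (fun w => w ∈ Hd), x w ≤
            (((S.filter (fun w => w ∉ RF)).filter (fun w => w ∈ Hd)).card : ℝ) *
              (x z / (2 * ((h:ℝ) + 1))) := by
          apply hsum_le
          intro w hw
          rw [Finset.mem_filter, Finset.mem_filter] at hw
          have hnot : ¬ x z / (2 * ((h:ℝ) + 1)) ≤ x w := by
            intro hcon2
            exact hw.1.2 (by rw [hRF, Finset.mem_filter]; exact ⟨Finset.mem_univ _, hcon2⟩)
          linarith [not_le.mp hnot]
        have hcard2 : (((S.filter (fun w => w ∉ RF)).filter (fun w => w ∈ Hd)).card : ℝ)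
            ≤ (h:ℝ) := by
          have hsub : (S.filter (fun w => w ∉ RF)).filter (fun w => w ∈ Hd) ⊆ Hd :=
            fun w hw => (Finset.mem_filter.mp hw).2
          exact_mod_cast (Finset.card_le_card hsub).trans hHdcard
        have htt_pos : (0:ℝ) < x z / (2 * ((h:ℝ) + 1)) := by positivity
        calc ∑ w ∈ (S.filter (fun w => w ∉ RF)).filter (fun w => w ∈ Hd), x w ≤ _ := hstep
          _ ≤ (h:ℝ) * (x z / (2 * ((h:ℝ) + 1))) :=
              mul_le_mul_of_nonneg_right hcard2 htt_pos.le
          _ ≤ x z / 2 := arith_half hhr1 hxz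
      have hb3 : ∑ w ∈ (S.filter (fun w => w ∉ RF)).filter (fun w => w ∉ Hd), x w ≤
          (if u ∈ Hd then (n:ℝ) else 3 * (h:ℝ) + 4) * ((3 * (h:ℝ) + 4) * x z / ρ) := by
        have hstep : ∑ w ∈ (S.filter (fun w => w ∉ RF)).filter (fun w => w ∉ Hd), x w ≤
            (((S.filter (fun w => w ∉ RF)).filter (fun w => w ∉ Hd)).card : ℝ) *
              ((3 * (h:ℝ) + 4) * x z / ρ) := by
          apply hsum_le
          intro w hw
          rw [Finset.mem_filter] at hw
          exact hxsmall w hw.2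
        refine hstep.trans ?_
        apply mul_le_mul_of_nonneg_right _
          (div_nonneg (mul_nonneg (by linarith) hxz.le) hρpos.le)
        by_cases hu : u ∈ Hd
        · rw [if_pos hu]
          have hsub : (S.filter (fun w => w ∉ RF)).filter (fun w => w ∉ Hd) ⊆ S :=
            fun w hw => Finset.mem_filter.mp (Finset.mem_filter.mp hw).1 |>.1
          exact_mod_cast (Finset.card_le_card hsub).trans (hdeg_le_n u)
        · rw [if_neg hu]
          have hdu : degOf G u ≤ 3 * h + 4 := by
            rw [hHd, Finset.mem_filter] at hu
            by_contra hcon2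
            exact hu ⟨Finset.mem_univ _, by omega⟩
          rw [degOf_eq_filter] at hdu
          have hsub : (S.filter (fun w => w ∉ RF)).filter (fun w => w ∉ Hd) ⊆ S :=
            fun w hw => Finset.mem_filter.mp (Finset.mem_filter.mp hw).1 |>.1
          have h6 := (Finset.card_le_card hsub).trans hdu
          have h7 : (((S.filter (fun w => w ∉ RF)).filter (fun w => w ∉ Hd)).card : ℝ) ≤
              ((3 * h + 4 : ℕ) : ℝ) := by exact_mod_cast h6
          push_cast at h7
          linarith
      rw [hsplit1, hsplit2]
      linarith [hb1, hb2, hb3]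
    -- sum over neighbors of z
    have hmain : ρ ^ 2 * x z ≤
        (h:ℝ) * (((h:ℝ) - 1) * x z + x z / 2 + (n:ℝ) * ((3 * (h:ℝ) + 4) * x z / ρ)) +
        (n:ℝ) * (((h:ℝ) - 1) * x z + x z / 2 +
          (3 * (h:ℝ) + 4) * ((3 * (h:ℝ) + 4) * x z / ρ)) := by
      have h1 : ρ ^ 2 * x z = ∑ u ∈ Finset.univ.filter (fun w => G.Adj z w), ρ * x u := by
        rw [← Finset.mul_sum, heigc z]
        ring
      rw [h1]
      set S := Finset.univ.filter (fun w => G.Adj z w) with hS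
      have hsplit : ∑ u ∈ S, ρ * x u =
          ∑ u ∈ S.filter (fun u => u ∈ Hd), ρ * x u +
          ∑ u ∈ S.filter (fun u => u ∉ Hd), ρ * x u :=
        (Finset.sum_filter_add_sum_filter_not S _ _).symm
      rw [hsplit]
      have he1 : (0:ℝ) ≤ ((h:ℝ) - 1) * x z := mul_nonneg (by linarith) hxz.le
      have he2 : (0:ℝ) ≤ (n:ℝ) * ((3 * (h:ℝ) + 4) * x z / ρ) :=
        mul_nonneg (Nat.cast_nonneg n)
          (div_nonneg (mul_nonneg (by linarith) hxz.le) hρpos.le)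
      have he3 : (0:ℝ) ≤ (3 * (h:ℝ) + 4) * ((3 * (h:ℝ) + 4) * x z / ρ) :=
        mul_nonneg (by linarith)
          (div_nonneg (mul_nonneg (by linarith) hxz.le) hρpos.le)
      have hBigpos : (0:ℝ) ≤ ((h:ℝ) - 1) * x z + x z / 2 +
          (n:ℝ) * ((3 * (h:ℝ) + 4) * x z / ρ) := by
        have hxz2 : (0:ℝ) ≤ x z / 2 := by linarith
        linarith
      have hSmallpos : (0:ℝ) ≤ ((h:ℝ) - 1) * x z + x z / 2 +
          (3 * (h:ℝ) + 4) * ((3 * (h:ℝ) + 4) * x z / ρ) := by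
        have hxz2 : (0:ℝ) ≤ x z / 2 := by linarith
        linarith
      have hp1 : ∑ u ∈ S.filter (fun u => u ∈ Hd), ρ * x u ≤
          (h:ℝ) * (((h:ℝ) - 1) * x z + x z / 2 + (n:ℝ) * ((3 * (h:ℝ) + 4) * x z / ρ)) := by
        have hstep : ∀ u ∈ S.filter (fun u => u ∈ Hd), ρ * x u ≤
            ((h:ℝ) - 1) * x z + x z / 2 + (n:ℝ) * ((3 * (h:ℝ) + 4) * x z / ρ) := by
          intro u hu
          rw [Finset.mem_filter] at hu
          have hbu := hbound u
          rw [if_pos hu.2] at hbu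
          exact hbu
        calc ∑ u ∈ S.filter (fun u => u ∈ Hd), ρ * x u ≤
            ((S.filter (fun u => u ∈ Hd)).card : ℝ) *
              (((h:ℝ) - 1) * x z + x z / 2 + (n:ℝ) * ((3 * (h:ℝ) + 4) * x z / ρ)) := by
              calc _ ≤ (S.filter (fun u => u ∈ Hd)).card •
                  (((h:ℝ) - 1) * x z + x z / 2 + (n:ℝ) * ((3 * (h:ℝ) + 4) * x z / ρ)) :=
                    Finset.sum_le_card_nsmul _ _ _ hstep
                _ = _ := nsmul_eq_mul _ _
          _ ≤ (h:ℝ) * _ := by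
              apply mul_le_mul_of_nonneg_right _ hBigpos
              have hsub : S.filter (fun u => u ∈ Hd) ⊆ Hd :=
                fun w hw => (Finset.mem_filter.mp hw).2
              exact_mod_cast (Finset.card_le_card hsub).trans hHdcard
      have hp2 : ∑ u ∈ S.filter (fun u => u ∉ Hd), ρ * x u ≤
          (n:ℝ) * (((h:ℝ) - 1) * x z + x z / 2 +
            (3 * (h:ℝ) + 4) * ((3 * (h:ℝ) + 4) * x z / ρ)) := by
        have hstep : ∀ u ∈ S.filter (fun u => u ∉ Hd), ρ * x u ≤
            ((h:ℝ) - 1) * x z + x z / 2 + (3 * (h:ℝ) + 4) * ((3 * (h:ℝ) + 4) * x z / ρ) := by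
          intro u hu
          rw [Finset.mem_filter] at hu
          have hbu := hbound u
          rw [if_neg hu.2] at hbu
          exact hbu
        calc ∑ u ∈ S.filter (fun u => u ∉ Hd), ρ * x u ≤
            ((S.filter (fun u => u ∉ Hd)).card : ℝ) *
              (((h:ℝ) - 1) * x z + x z / 2 +
                (3 * (h:ℝ) + 4) * ((3 * (h:ℝ) + 4) * x z / ρ)) := by
              calc _ ≤ (S.filter (fun u => u ∉ Hd)).card •
                  (((h:ℝ) - 1) * x z + x z / 2 +
                    (3 * (h:ℝ) + 4) * ((3 * (h:ℝ) + 4) * x z / ρ)) :=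
                    Finset.sum_le_card_nsmul _ _ _ hstep
                _ = _ := nsmul_eq_mul _ _
          _ ≤ (n:ℝ) * _ := by
              apply mul_le_mul_of_nonneg_right _ hSmallpos
              have hsub : S.filter (fun u => u ∉ Hd) ⊆ S := Finset.filter_subset _ _
              exact_mod_cast (Finset.card_le_card hsub).trans (hdeg_le_n z)
      linarith [hp1, hp2]
    exact numeric_contra hhr1 hn8 hQbig hQpos hQρ hρpos hQsq hρsq hxz hmain
  -- now RF.card = h
  have hRFcard : RF.card = h := le_antisymm hRFle hRFge
  have hsetRF : {v : Fin n | x z / (2 * ((h : ℝ) + 1)) ≤ x v} = ↑RF := by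
    ext v
    rw [hRF]
    simp only [Finset.coe_filter, Set.mem_setOf_eq, Finset.mem_univ, true_and]
  constructor
  · intro u v hu hv hadj
    rw [hsetRF, Finset.mem_coe] at hu hv
    apply hfree
    apply core_forest G u v hadj RF hRFcard hu hv
    intro w hw
    rw [hRF, Finset.mem_filter] at hw
    exact hRdeg w hw.2
  · rw [hsetRF]
    have hcompl := Set.ncard_add_ncard_compl (↑RF : Set (Fin n))
    rw [Set.ncard_coe_finset, hRFcard, Nat.card_eq_fintype_card, Fintype.card_fin] at hcompl
    omega
end

section
/- Let K_{n_1,...,n_k} be a complete k-partite graph of order n. If there exist indices i and j with n_i - n_j ≥ 2, then ρ(K_{n_1,...,n_i - 1,...,n_j + 1,...,n_k}) > ρ(K_{n_1,...,n_i,...,n_j,...,n_k}); that is, moving one vertex from a part that is larger by at least 2 to a smaller part strictly increases the spectral radius. -/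
open SimpleGraph Matrix

/- ---------------- Auxiliary material ---------------- -/

lemma mem_spectrum_iff_eig {n : Type*} [Fintype n] [DecidableEq n] (A : Matrix n n ℝ) (μ : ℝ) :
    μ ∈ spectrum ℝ A ↔ ∃ v : n → ℝ, v ≠ 0 ∧ A.mulVec v = μ • v := by
  rw [← AlgEquiv.spectrum_eq (Matrix.toLinAlgEquiv' (R := ℝ) (n := n)) A,
      ← Module.End.hasEigenvalue_iff_mem_spectrum]
  constructor
  · intro h
    obtain ⟨v, hv⟩ := h.exists_hasEigenvector
    refine ⟨v, hv.2, ?_⟩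
    have := Module.End.mem_eigenspace_iff.mp hv.1
    simpa [Matrix.toLinAlgEquiv'_apply] using this
  · rintro ⟨v, hv0, hv⟩
    apply Module.End.hasEigenvalue_of_hasEigenvector (x := v)
    refine ⟨Module.End.mem_eigenspace_iff.mpr ?_, hv0⟩
    simpa [Matrix.toLinAlgEquiv'_apply] using hv

section Multipartite

variable {k : ℕ}

lemma adj_mulVec (g : Fin k → ℕ) (w : (Σ t, Fin (g t)) → ℝ) (u : Σ t, Fin (g t)) :
    (adjMat (completeMultipartiteGraph fun t => Fin (g t))).mulVec w u
      = (∑ t, ∑ a : Fin (g t), w ⟨t, a⟩) - ∑ a : Fin (g u.1), w ⟨u.1, a⟩ := by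
  have hterm : ∀ v : Σ t, Fin (g t),
      adjMat (completeMultipartiteGraph fun t => Fin (g t)) u v * w v
        = w v - (if u.1 = v.1 then w v else 0) := by
    intro v
    by_cases h : u.1 = v.1 <;> simp [adjMat, h]
  rw [Matrix.mulVec, show ((adjMat (completeMultipartiteGraph fun t => Fin (g t)) u) ⬝ᵥ w)
      = ∑ v, adjMat (completeMultipartiteGraph fun t => Fin (g t)) u v * w v from rfl,
    Finset.sum_congr rfl (fun v _ => hterm v), Finset.sum_sub_distrib]
  congr 1
  · rw [← Finset.univ_sigma_univ, Finset.sum_sigma]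
  · rw [← Finset.univ_sigma_univ, Finset.sum_sigma]
    have : ∀ t : Fin k, (∑ a : Fin (g t), if u.1 = t then w ⟨t, a⟩ else 0)
        = if u.1 = t then ∑ a : Fin (g t), w ⟨t, a⟩ else 0 := by
      intro t
      by_cases h : u.1 = t <;> simp [h]
    rw [Finset.sum_congr rfl (fun t _ => this t)]
    simp

lemma F_strictAnti (g : Fin k → ℕ) (t0 : Fin k) (ht0 : 0 < g t0) {x y : ℝ}
    (hx : 0 < x) (hxy : x < y) :
    ∑ t, (g t : ℝ) / (y + g t) < ∑ t, (g t : ℝ) / (x + g t) := by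
  apply Finset.sum_lt_sum
  · intro t _
    rcases Nat.eq_zero_or_pos (g t) with h | h
    · simp [h]
    · have hc : (0:ℝ) < g t := by exact_mod_cast h
      apply div_le_div_of_nonneg_left (le_of_lt hc) (by linarith) (by linarith)
  · refine ⟨t0, Finset.mem_univ _, ?_⟩
    have hc : (0:ℝ) < g t0 := by exact_mod_cast ht0
    apply div_lt_div_of_pos_left hc (by linarith) (by linarith)

lemma isGreatest_spec (g : Fin k → ℕ) {ρ : ℝ} (hρ : 0 < ρ)
    (hF : ∑ t, (g t : ℝ) / (ρ + g t) = 1) :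
    IsGreatest (spectrum ℝ (adjMat (completeMultipartiteGraph fun t => Fin (g t)))) ρ := by
  have hpos : ∀ t : Fin k, 0 < ρ + (g t : ℝ) := by
    intro t
    have : (0:ℝ) ≤ g t := Nat.cast_nonneg _
    linarith
  obtain ⟨t0, ht0⟩ : ∃ t, 0 < g t := by
    by_contra h
    push_neg at h
    simp only [Nat.le_zero] at h
    rw [Finset.sum_eq_zero (fun t _ => by simp [h t])] at hF
    exact zero_ne_one hF
  constructor
  · rw [mem_spectrum_iff_eig]
    refine ⟨fun u => 1 / (ρ + g u.1), ?_, ?_⟩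
    · intro h0
      have := congrFun h0 ⟨t0, ⟨0, ht0⟩⟩
      simp only [Pi.zero_apply, div_eq_zero_iff, one_ne_zero, false_or] at this
      exact absurd this (ne_of_gt (hpos t0))
    · funext u
      rw [adj_mulVec]
      have hS : ∀ t : Fin k, (∑ _a : Fin (g t), (1:ℝ)/(ρ + g t)) = (g t : ℝ)/(ρ + g t) := by
        intro t
        rw [Finset.sum_const]
        simp [div_eq_mul_inv, mul_comm]
      simp only []
      rw [Finset.sum_congr rfl (fun t _ => hS t), hF, hS u.1]
      have h1 : ρ + (g u.1 : ℝ) ≠ 0 := ne_of_gt (hpos u.1)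
      rw [Pi.smul_apply, smul_eq_mul]
      field_simp
      ring
  · intro μ hμ
    by_contra hlt
    push_neg at hlt
    have hμ0 : 0 < μ := hρ.trans hlt
    rw [mem_spectrum_iff_eig] at hμ
    obtain ⟨w, hw0, hw⟩ := hμ
    set S : Fin k → ℝ := fun t => ∑ a : Fin (g t), w ⟨t, a⟩ with hSdef
    set T : ℝ := ∑ t, S t with hTdef
    have heq : ∀ u : Σ t, Fin (g t), μ * w u = T - S u.1 := by
      intro u
      have h1 := congrFun hw u
      rw [adj_mulVec] at h1
      rw [Pi.smul_apply, smul_eq_mul] at h1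
      exact h1.symm
    have hμpos' : ∀ t : Fin k, 0 < μ + (g t : ℝ) := by
      intro t
      have : (0:ℝ) ≤ g t := Nat.cast_nonneg _
      linarith
    have hSt : ∀ t, S t = (g t : ℝ) * T / (μ + g t) := by
      intro t
      have h1 : μ * S t = (g t : ℝ) * (T - S t) := by
        have hterm : ∀ a : Fin (g t), μ * w ⟨t, a⟩ = T - S t := fun a => heq ⟨t, a⟩
        calc μ * S t = ∑ a : Fin (g t), μ * w ⟨t, a⟩ := Finset.mul_sum _ _ _
          _ = ∑ _a : Fin (g t), (T - S t) := Finset.sum_congr rfl (fun a _ => hterm a)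
          _ = (g t : ℝ) * (T - S t) := by
              rw [Finset.sum_const, Finset.card_univ, Fintype.card_fin, nsmul_eq_mul]
      rw [eq_div_iff (ne_of_gt (hμpos' t))]
      nlinarith [h1]
    have hT0 : T ≠ 0 := by
      intro h
      apply hw0
      funext u
      have h1 := heq u
      have h2 : S u.1 = 0 := by rw [hSt u.1, h]; ring
      rw [h, h2] at h1
      simp only [sub_zero] at h1
      have := mul_eq_zero.mp (by linarith : μ * w u = 0)
      rcases this with h3 | h3
      · exact absurd h3 (ne_of_gt hμ0)
      · simpa using h3
    have hFμ : ∑ t, (g t : ℝ) / (μ + g t) = 1 := by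
      have h1 : T = T * ∑ t, (g t : ℝ) / (μ + g t) := by
        conv_lhs => rw [hTdef]
        rw [Finset.mul_sum]
        refine Finset.sum_congr rfl (fun t _ => ?_)
        rw [hSt t]
        field_simp
      have h2 : T * 1 = T * ∑ t, (g t : ℝ) / (μ + g t) := by rw [mul_one]; exact h1
      exact (mul_left_cancel₀ hT0 h2).symm
    have := F_strictAnti g t0 ht0 hρ hlt
    rw [hF, hFμ] at this
    exact lt_irrefl 1 this

lemma exists_root (g : Fin k → ℕ) (t1 t2 : Fin k) (h12 : t1 ≠ t2)
    (h1 : 0 < g t1) (h2 : 0 < g t2) :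
    ∃ ρ : ℝ, 0 < ρ ∧ ∑ t, (g t : ℝ) / (ρ + g t) = 1 := by
  set N : ℝ := ∑ t, (g t : ℝ) with hN
  have hNt : ∀ t, (g t : ℝ) ≤ N := by
    intro t
    rw [hN]
    exact Finset.single_le_sum (f := fun t => (g t : ℝ)) (fun t _ => Nat.cast_nonneg _)
      (Finset.mem_univ t)
  have hN2 : (2:ℝ) ≤ N := by
    have : (g t1 : ℝ) + g t2 ≤ N := by
      rw [hN, ← Finset.sum_pair (f := fun t => (g t : ℝ)) h12]
      exact Finset.sum_le_sum_of_subset_of_nonneg (Finset.subset_univ _)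
        (fun t _ _ => Nat.cast_nonneg _)
    have c1 : (1:ℝ) ≤ g t1 := by exact_mod_cast h1
    have c2 : (1:ℝ) ≤ g t2 := by exact_mod_cast h2
    linarith
  have hcont : ContinuousOn (fun x => ∑ t, (g t : ℝ) / (x + g t)) (Set.Icc (1/2 : ℝ) N) := by
    apply continuousOn_finset_sum
    intro t _
    apply ContinuousOn.div continuousOn_const (continuousOn_id.add continuousOn_const)
    intro x hx
    have h1 := hx.1
    have : (0:ℝ) ≤ g t := Nat.cast_nonneg _
    simp only [Pi.add_apply, id_eq, id]
    intro hc
    linarith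
  have hhi : (1:ℝ) < ∑ t, (g t : ℝ) / ((1/2 : ℝ) + g t) := by
    have hterm : ∀ t, 0 < g t → (2/3 : ℝ) ≤ (g t : ℝ) / ((1/2 : ℝ) + g t) := by
      intro t ht
      have hc : (1:ℝ) ≤ g t := by exact_mod_cast ht
      rw [le_div_iff₀ (by linarith)]
      linarith
    have hsub : ({t1, t2} : Finset (Fin k)) ⊆ Finset.univ := Finset.subset_univ _
    have h1' : (∑ t ∈ ({t1, t2} : Finset (Fin k)), (g t : ℝ) / ((1/2 : ℝ) + g t))
        ≤ ∑ t, (g t : ℝ) / ((1/2 : ℝ) + g t) := by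
      apply Finset.sum_le_sum_of_subset_of_nonneg hsub
      intro t _ _
      have : (0:ℝ) ≤ g t := Nat.cast_nonneg _
      positivity
    rw [Finset.sum_pair h12] at h1'
    have a1 := hterm t1 h1
    have a2 := hterm t2 h2
    linarith
  have hlo : (∑ t, (g t : ℝ) / (N + g t)) < 1 := by
    have hNpos : (0:ℝ) < N := by linarith
    have : (∑ t, (g t : ℝ) / (N + g t)) < ∑ t, (g t : ℝ) / N := by
      apply Finset.sum_lt_sum
      · intro t _
        rcases Nat.eq_zero_or_pos (g t) with h | h
        · simp [h]
        · have hc : (0:ℝ) < g t := by exact_mod_cast h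
          apply div_le_div_of_nonneg_left (le_of_lt hc) hNpos (by linarith)
      · refine ⟨t1, Finset.mem_univ _, ?_⟩
        have hc : (0:ℝ) < g t1 := by exact_mod_cast h1
        apply div_lt_div_of_pos_left hc hNpos (by linarith)
    rw [← Finset.sum_div, ← hN, div_self (ne_of_gt hNpos)] at this
    exact this
  have hab : (1/2 : ℝ) ≤ N := by linarith
  have hmem : (1:ℝ) ∈ Set.Icc ((fun x => ∑ t, (g t : ℝ) / (x + g t)) N)
      ((fun x => ∑ t, (g t : ℝ) / (x + g t)) (1/2)) := ⟨le_of_lt hlo, le_of_lt hhi⟩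
  obtain ⟨ρ, hρmem, hρ⟩ := intermediate_value_Icc' hab hcont hmem
  exact ⟨ρ, lt_of_lt_of_le one_half_pos hρmem.1, hρ⟩

lemma key_ineq {x a b : ℝ} (hx : 0 < x) (hb : 0 ≤ b) (hab : b + 2 ≤ a) :
    a / (x + a) + b / (x + b) < (a - 1) / (x + (a - 1)) + (b + 1) / (x + (b + 1)) := by
  have ha : 0 < x + a := by linarith
  have ha' : 0 < x + (a - 1) := by linarith
  have hb' : 0 < x + (b + 1) := by linarith
  have hb0 : 0 < x + b := by linarith
  rw [div_add_div _ _ (ne_of_gt ha) (ne_of_gt hb0),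
    div_add_div _ _ (ne_of_gt ha') (ne_of_gt hb'),
    div_lt_div_iff₀ (by positivity) (by positivity)]
  have hd : ((a - 1) * (x + (b + 1)) + (x + (a - 1)) * (b + 1)) * ((x + a) * (x + b))
      - (a * (x + b) + (x + a) * b) * ((x + (a - 1)) * (x + (b + 1)))
      = (a - b - 1) * (2 * x ^ 2 + x * (a + b)) := by ring
  have h1' : (1:ℝ) ≤ a - b - 1 := by linarith
  have h2' : (0:ℝ) < 2 * x ^ 2 + x * (a + b) := by nlinarith
  have h3' := mul_le_mul_of_nonneg_right h1' (le_of_lt h2')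
  rw [one_mul] at h3'
  linarith [hd, h3', h2']

lemma sum_update2 (g : Fin k → ℕ) (i j : Fin k) (hij : i ≠ j) (ψ : ℕ → ℝ) (a b : ℕ) :
    ∑ t, ψ (Function.update (Function.update g i a) j b t)
      = ψ a + ψ b + ∑ t ∈ (Finset.univ \ {j}) \ {i}, ψ (g t) := by
  have e1 : (fun t => ψ (Function.update (Function.update g i a) j b t))
      = Function.update (fun t => ψ (Function.update g i a t)) j (ψ b) := by
    funext t
    by_cases h : t = j <;> simp [Function.update, h]
  have e2 : (fun t => ψ (Function.update g i a t))
      = Function.update (fun t => ψ (g t)) i (ψ a) := by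
    funext t
    by_cases h : t = i <;> simp [Function.update, h]
  calc ∑ t, ψ (Function.update (Function.update g i a) j b t)
      = ∑ t, Function.update (fun t => ψ (Function.update g i a t)) j (ψ b) t := by rw [e1]
    _ = ψ b + ∑ t ∈ Finset.univ \ {j}, ψ (Function.update g i a t) :=
        Finset.sum_update_of_mem (Finset.mem_univ j) _ _
    _ = ψ b + ∑ t ∈ Finset.univ \ {j}, Function.update (fun t => ψ (g t)) i (ψ a) t := by
        exact congrArg _ (Finset.sum_congr rfl (fun t _ => congrFun e2 t))
    _ = ψ b + (ψ a + ∑ t ∈ (Finset.univ \ {j}) \ {i}, ψ (g t)) := by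
        rw [Finset.sum_update_of_mem (by simp [hij]) _ _]
    _ = ψ a + ψ b + ∑ t ∈ (Finset.univ \ {j}) \ {i}, ψ (g t) := by ring

end Multipartite

/-- Wang–Hou–Ma: in a complete `k`-partite graph, moving one vertex from a part that is
larger by at least `2` to a smaller part strictly increases the spectral radius. -/
theorem balanced_multipartite_spectral_radius (k : ℕ) (f : Fin k → ℕ) (i j : Fin k)
    (hij : i ≠ j) (hge : f j + 2 ≤ f i) :
    specRad (completeMultipartiteGraph (fun t => Fin (f t))) <
      specRad (completeMultipartiteGraph
        (fun t => Fin (Function.update (Function.update f i (f i - 1)) j (f j + 1) t))) := by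
  classical
  set f' : Fin k → ℕ := Function.update (Function.update f i (f i - 1)) j (f j + 1) with hf'
  have hf'i : f' i = f i - 1 := by
    rw [hf', Function.update_of_ne hij, Function.update_self]
  have hf'j : f' j = f j + 1 := by rw [hf', Function.update_self]
  have h1 : 0 < f' i := by omega
  have h2 : 0 < f' j := by omega
  obtain ⟨ρ', hρ'pos, hρ'F⟩ := exists_root f' i j hij h1 h2
  have hnew := isGreatest_spec f' hρ'pos hρ'F
  have hnewEq : specRad (completeMultipartiteGraph fun t => Fin (f' t)) = ρ' := by
    unfold specRad
    exact hnew.csSup_eq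
  have hVne : Nonempty ((t : Fin k) × Fin (f t)) := ⟨⟨i, ⟨0, by omega⟩⟩⟩
  rw [show specRad (completeMultipartiteGraph
        (fun t => Fin (Function.update (Function.update f i (f i - 1)) j (f j + 1) t)))
      = specRad (completeMultipartiteGraph fun t => Fin (f' t)) from rfl, hnewEq]
  by_cases hcase : ∃ t, t ≠ i ∧ 0 < f t
  · obtain ⟨t2, ht2i, ht2⟩ := hcase
    obtain ⟨ρ, hρpos, hρF⟩ := exists_root f i t2 (Ne.symm ht2i) (by omega) ht2
    have hold := isGreatest_spec f hρpos hρF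
    have holdEq : specRad (completeMultipartiteGraph fun t => Fin (f t)) = ρ := by
      unfold specRad
      exact hold.csSup_eq
    rw [holdEq]
    -- key: F'(ρ) > 1
    have hcasti : ((f i - 1 : ℕ) : ℝ) = (f i : ℝ) - 1 := by
      have : (1:ℕ) ≤ f i := by omega
      push_cast [Nat.cast_sub this]
      ring
    have hkey : 1 < ∑ t, (f' t : ℝ) / (ρ + f' t) := by
      set ψ : ℕ → ℝ := fun c => (c : ℝ) / (ρ + c) with hψ
      have hs1 : ∑ t, (f' t : ℝ) / (ρ + f' t)
          = ψ (f i - 1) + ψ (f j + 1) + ∑ t ∈ (Finset.univ \ {j}) \ {i}, ψ (f t) := by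
        rw [hf']
        exact sum_update2 f i j hij ψ _ _
      have hs2 : ∑ t, (f t : ℝ) / (ρ + f t)
          = ψ (f i) + ψ (f j) + ∑ t ∈ (Finset.univ \ {j}) \ {i}, ψ (f t) := by
        have : f = Function.update (Function.update f i (f i)) j (f j) := by
          simp [Function.update_eq_self]
        conv_lhs => rw [this]
        exact sum_update2 f i j hij ψ _ _
      have hki : ψ (f i) + ψ (f j) < ψ (f i - 1) + ψ (f j + 1) := by
        have hb : (0:ℝ) ≤ (f j : ℝ) := Nat.cast_nonneg _
        have hab : (f j : ℝ) + 2 ≤ (f i : ℝ) := by exact_mod_cast hge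
        have := key_ineq hρpos hb hab
        rw [hψ]
        simp only []
        rw [hcasti]
        push_cast
        convert this using 2
      rw [hs1]
      rw [hρF] at hs2
      linarith [hs2, hki]
    -- conclude ρ < ρ'
    rcases lt_trichotomy ρ ρ' with h | h | h
    · exact h
    · exfalso
      rw [← h] at hρ'F
      rw [hρ'F] at hkey
      exact lt_irrefl 1 hkey
    · exfalso
      have := F_strictAnti f' i h1 hρ'pos h
      rw [hρ'F] at this
      linarith
  · push_neg at hcase
    have hzero : ∀ t, t ≠ i → f t = 0 := by
      intro t ht
      have := hcase t ht
      omega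
    have hpart : ∀ u : (t : Fin k) × Fin (f t), u.1 = i := by
      intro u
      by_contra h
      have h0 := hzero u.1 h
      have h1 : Fin (f u.1) := u.2
      rw [h0] at h1
      exact h1.elim0
    have hA : adjMat (completeMultipartiteGraph fun t => Fin (f t)) = 0 := by
      funext u v
      simp [adjMat, hpart u, hpart v]
    haveI := hVne
    have holdEq : specRad (completeMultipartiteGraph fun t => Fin (f t)) = 0 := by
      unfold specRad
      rw [hA, spectrum.zero_eq, csSup_singleton]
    rw [holdEq]
    exact hρ'pos
end
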